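/- Let V and W be finite-dimensional real vector spaces and let β : V × V → W be a symmetric bilinear map such that β(v,v) ≠ 0 for every v ≠ 0, and assume dim W < dim V. Then there exist linearly independent vectors v₁, v₂ ∈ V such that β(v₁,v₁) = β(v₂,v₂) and β(v₁,v₂) = 0. -/

import Mathlib

/-!
Complexify. In coordinates, the components of `β` are `dim W` real symmetric bilinear forms, and
each defines a complex quadratic polynomial in `dim V` variables vanishing at the origin. An ideal
generated by fewer than `dim V` elements has height less than `dim V` (Krull), whereas the ideal of
a point has height exactly `dim V`; by the Nullstellensatz the polynomials therefore have a common
zero `z = x + i y ≠ 0`. Since `β(z, z) = β(x, x) - β(y, y) + 2 i β(x, y)`, the pair `x, y` satisfies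
the two equations, and definiteness of `β` makes it linearly independent.
-/

open MvPolynomial Module

namespace MvPolynomial

section Translate

variable {σ R : Type*} [CommRing R]

noncomputable def translate (a : σ → R) : MvPolynomial σ R ≃ₐ[R] MvPolynomial σ R :=
  AlgEquiv.ofAlgHom (aeval fun i => X i + C (a i)) (aeval fun i => X i - C (a i))
    (by ext i; simp) (by ext i; simp)

lemma eval_translate (a x : σ → R) (p : MvPolynomial σ R) :
    eval x (translate a p) = eval (x + a) p := by
  have : (aeval x).comp (aeval fun i => X i + C (a i)) = aeval (x + a) := by ext i; simp
  rw [← coe_aeval_eq_eval, ← coe_aeval_eq_eval]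
  exact DFunLike.congr_fun this p

end Translate

variable {σ K : Type*} [Field K]

lemma comap_translate_vanishingIdeal_singleton (a b : σ → K) :
    (vanishingIdeal K {b}).comap (translate a) = vanishingIdeal K {b + a} := by
  ext p
  simp [eval_translate]

variable [IsAlgClosed K] [Finite σ]

/- Some maximal ideal has height `ringKrullDim = card σ`; it is the ideal of a point, and
translations carry it to the ideal of any other point. -/
lemma height_vanishingIdeal_singleton (a : σ → K) :
    (vanishingIdeal K {a} : Ideal (MvPolynomial σ K)).height = Nat.card σ := by
  have hdim : ringKrullDim (MvPolynomial σ K) = Nat.card σ := by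
    simp [MvPolynomial.ringKrullDim_of_isNoetherianRing]
  have : FiniteRingKrullDim (MvPolynomial σ K) := by
    refine finiteRingKrullDim_iff_ne_bot_and_top.mpr ⟨by simp [hdim], ?_⟩
    rw [hdim, ← WithBot.coe_natCast, ← WithBot.coe_top]
    exact WithBot.coe_injective.ne (ENat.natCast_ne_top _)
  obtain ⟨P, hPmax, hP⟩ := Ideal.exists_isMaximal_height (R := MvPolynomial σ K)
  obtain ⟨b, rfl⟩ := isMaximal_iff_eq_vanishingIdeal_singleton.mp hPmax
  rw [← add_sub_cancel b a, ← comap_translate_vanishingIdeal_singleton]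
  exact_mod_cast (RingEquiv.height_comap (translate (a - b)).toRingEquiv _).trans
    (WithBot.coe_injective (hP.trans hdim))

theorem exists_ne_zero_forall_eval_eq_zero {ι : Type*} [Finite ι]
    (hcard : Nat.card ι < Nat.card σ) (q : ι → MvPolynomial σ K) (hq : ∀ j, eval 0 (q j) = 0) :
    ∃ z : σ → K, z ≠ 0 ∧ ∀ j, eval z (q j) = 0 := by
  by_contra! h
  set I := Ideal.span (Set.range q)
  have hzero : zeroLocus K I = {0} := by
    refine Set.eq_singleton_iff_unique_mem.mpr ⟨by simpa [I, zeroLocus_span] using hq, ?_⟩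
    intro z hz
    by_contra hz0
    obtain ⟨j, hj⟩ := h z hz0
    simp only [I, zeroLocus_span, Set.forall_mem_range] at hz
    exact hj (hz j)
  have hmin : vanishingIdeal K {(0 : σ → K)} ∈ I.minimalPrimes := by
    rw [← Ideal.radical_minimalPrimes, ← vanishingIdeal_zeroLocus_eq_radical (K := K), hzero,
      Ideal.minimalPrimes_eq_subsingleton_self]
    rfl
  have hheight := Ideal.height_le_card_of_mem_minimalPrimes_span (Set.finite_range q) hmin
  have hrange : (Set.range q).ncard ≤ Nat.card ι := by
    rw [← Set.image_univ, ← Set.ncard_univ]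
    exact Set.ncard_image_le
  rw [height_vanishingIdeal_singleton] at hheight
  have : (Nat.card σ : ℕ∞) ≤ Nat.card ι := hheight.trans (by exact_mod_cast hrange)
  exact hcard.not_ge (by exact_mod_cast this)

end MvPolynomial

namespace LinearMap.BilinForm

variable {κ V : Type*} [Fintype κ] [AddCommGroup V] [Module ℝ V]

/- The quadratic form `z ↦ B_ℂ(z, z)` of the complexification of `B`, in the coordinates of `e`. -/
noncomputable def complexQuadraticPoly (e : Basis κ ℝ V) (B : LinearMap.BilinForm ℝ V) :
    MvPolynomial κ ℂ :=
  ∑ k, ∑ l, C (B (e k) (e l) : ℂ) * X k * X l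

lemma eval_zero_complexQuadraticPoly (e : Basis κ ℝ V) (B : LinearMap.BilinForm ℝ V) :
    eval 0 (B.complexQuadraticPoly e) = 0 := by
  simp [complexQuadraticPoly]

lemma eval_complexQuadraticPoly (e : Basis κ ℝ V) (B : LinearMap.BilinForm ℝ V) (u w : V) :
    eval (fun k => ⟨e.repr u k, e.repr w k⟩) (B.complexQuadraticPoly e) =
      ⟨B u u - B w w, B u w + B w u⟩ := by
  classical
  conv_rhs => rw [← Matrix.toBilin_toMatrix e B]
  simp only [Matrix.toBilin_apply, toMatrix_apply, complexQuadraticPoly, map_sum, map_mul, eval_C,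
    eval_X]
  apply Complex.ext
  · simp only [Complex.re_sum, Complex.mul_re, Complex.mul_im, Complex.ofReal_re,
      Complex.ofReal_im, ← Finset.sum_sub_distrib]
    exact Finset.sum_congr rfl fun k _ => Finset.sum_congr rfl fun l _ => by ring
  · simp only [Complex.im_sum, Complex.mul_im, Complex.mul_re, Complex.ofReal_re,
      Complex.ofReal_im, ← Finset.sum_add_distrib]
    exact Finset.sum_congr rfl fun k _ => Finset.sum_congr rfl fun l _ => by ring

end LinearMap.BilinForm

theorem exists_common_complex_isotropic_of_card_lt_finrank {ι V : Type*} [Finite ι]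
    [AddCommGroup V] [Module ℝ V] [FiniteDimensional ℝ V] (b : ι → LinearMap.BilinForm ℝ V)
    (hb : ∀ j u w, b j u w = b j w u) (hcard : Nat.card ι < finrank ℝ V) :
    ∃ u w : V, (u ≠ 0 ∨ w ≠ 0) ∧ ∀ j, b j u u = b j w w ∧ b j u w = 0 := by
  set e := Module.finBasis ℝ V
  obtain ⟨z, hz0, hz⟩ := exists_ne_zero_forall_eval_eq_zero (K := ℂ) (by simpa using hcard)
    (fun j => (b j).complexQuadraticPoly e) (fun j => (b j).eval_zero_complexQuadraticPoly e)
  set u := e.equivFun.symm fun k => (z k).re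
  set w := e.equivFun.symm fun k => (z k).im
  have hz_eq : z = fun k => ⟨e.repr u k, e.repr w k⟩ := by funext k; simp only [u, w, ← Basis.equivFun_apply, LinearEquiv.apply_symm_apply]
  refine ⟨u, w, ?_, fun j => ?_⟩
  · by_contra! h
    exact hz0 (by simp [hz_eq, h.1, h.2, funext_iff, Complex.ext_iff])
  · have hzj := hz j
    rw [hz_eq, LinearMap.BilinForm.eval_complexQuadraticPoly, Complex.ext_iff] at hzj
    obtain ⟨hre, him⟩ := hzj
    simp only [Complex.zero_re, Complex.zero_im, hb j w u] at hre him
    exact ⟨sub_eq_zero.mp hre, by linarith⟩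

lemma linearIndependent_pair_of_apply_self_eq {K V W : Type*} [Field K] [AddCommGroup V]
    [Module K V] [AddCommGroup W] [Module K W] {β : V →ₗ[K] V →ₗ[K] W}
    (hdef : ∀ v, v ≠ 0 → β v v ≠ 0) {u w : V} (hne : u ≠ 0 ∨ w ≠ 0) (hnorm : β u u = β w w)
    (horth : β u w = 0) : LinearIndependent K ![u, w] := by
  have hu : u ≠ 0 := fun hu => hne.elim (· hu) fun hw => hdef w hw (by simp [← hnorm, hu])
  have hw : w ≠ 0 := fun hw => hdef u hu (by simp [hnorm, hw])
  rw [LinearIndependent.pair_iff]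
  intro s t hst
  have hs : s = 0 := by
    have := congrArg (β u) hst
    simp only [map_add, map_smul, horth, smul_zero, add_zero, map_zero, smul_eq_zero] at this
    exact this.resolve_right (hdef u hu)
  subst hs
  simp only [zero_smul, zero_add, smul_eq_zero] at hst
  exact ⟨rfl, hst.resolve_right hw⟩

/-- **Otsuki's Lemma.** Let `V` and `W` be finite-dimensional real vector spaces and
`β : V × V → W` a symmetric bilinear map such that `β (v, v) ≠ 0` for all `v ≠ 0`, and
assume `dim W < dim V`. Then there exist linearly independent vectors `v₁, v₂ ∈ V` with
`β (v₁, v₁) = β (v₂, v₂)` and `β (v₁, v₂) = 0`. -/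
theorem otsuki_lemma
    (V W : Type*) [AddCommGroup V] [Module ℝ V] [FiniteDimensional ℝ V]
    [AddCommGroup W] [Module ℝ W] [FiniteDimensional ℝ W]
    (β : V →ₗ[ℝ] V →ₗ[ℝ] W)
    (hsymm : ∀ v w : V, β v w = β w v)
    (hdef : ∀ v : V, v ≠ 0 → β v v ≠ 0)
    (hdim : Module.finrank ℝ W < Module.finrank ℝ V) :
    ∃ v₁ v₂ : V, LinearIndependent ℝ ![v₁, v₂] ∧
      β v₁ v₁ = β v₂ v₂ ∧ β v₁ v₂ = 0 := by
  set bW := Module.finBasis ℝ W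
  obtain ⟨u, w, hne, h⟩ := exists_common_complex_isotropic_of_card_lt_finrank
    (fun j => β.compr₂ (bW.coord j)) (fun j x y => by simp [hsymm x y]) (by simpa using hdim)
  have hnorm : β u u = β w w := bW.ext_elem fun j => (h j).1
  have horth : β u w = 0 := bW.forall_coord_eq_zero_iff.mp fun j => (h j).2
  exact ⟨u, w, linearIndependent_pair_of_apply_self_eq hdef hne hnorm horth, hnorm, horth⟩
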